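/- For every y₀ ∈ L²(Ω), f ∈ L²(Q_T) and F ∈ L²(Q_T)^N, there exists a unique solution by transposition (y,p) ∈ L²(Q_T) × L²(Q_T)^N of the first-order parabolic system y_t − ∇·p + dy = f, c(x)∇y − p = F in Q_T, y = 0 on Σ_T, y(·,0) = y₀. -/

import Mathlib

open MeasureTheory
open scoped RealInnerProductSpace

/-!
The Gelfand triple `H¹₀(Ω) ⊂ L²(Ω) ⊂ H⁻¹(Ω)` is modelled by Hilbert spaces `V`, `H` and
`W = L²(Ω)^N`, with `ι : V → H` the injection, `grad : V → W`, `cInv` the multiplication by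
`c(x)⁻¹` and `dmul t` the multiplication by `d(·,t)`; `L²(Q_T)` and `L²(Q_T)^N` are the Bochner
spaces `Lp H 2` and `Lp W 2` over `(0,T)`.

The right-hand side `M(g,G)` is the inner product of `(f, y₀, c⁻¹F)` with the observation
`(φ, φ(·,0), σ)` of a backward solution with data `(g,G)`. By the energy estimate this observation
depends only on the class of `(g,G)` in `L²(Q_T) × L²(Q_T)^N`, and is a bounded linear operator `S`
of it. Hence `(y,p) := S*(f, y₀, c⁻¹F)` is a solution by transposition, and it is the only one
because every `(g,G)` admits a backward solution.
-/

variable {V H W : Type*}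
  [NormedAddCommGroup V] [InnerProductSpace ℝ V] [CompleteSpace V]
  [NormedAddCommGroup H] [InnerProductSpace ℝ H] [CompleteSpace H]
  [NormedAddCommGroup W] [InnerProductSpace ℝ W] [CompleteSpace W]

/-- Weak solution of the backward first-order parabolic system
`−φ_t − ∇·σ + dφ = g`, `∇φ − c⁻¹σ = G` in `Q_T`, `φ = 0` on `Σ_T`,
`φ(·,T) = 0`. -/
def IsBackwardWeakSolution (T : ℝ) (ι : V →L[ℝ] H) (grad : V →L[ℝ] W)
    (cInv : W →L[ℝ] W) (dmul : ℝ → H →L[ℝ] H)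
    (g : ℝ → H) (G : ℝ → W)
    (φ : ℝ → V) (φt : ℝ → V →L[ℝ] ℝ) (σ : ℝ → W) : Prop :=
  MemLp φ 2 (volume.restrict (Set.Ioo 0 T)) ∧
  MemLp φt 2 (volume.restrict (Set.Ioo 0 T)) ∧
  MemLp σ 2 (volume.restrict (Set.Ioo 0 T)) ∧
  (∀ w : V, ∀ᵐ t ∂(volume.restrict (Set.Ioo 0 T)),
    HasDerivAt (fun s => ⟪ι (φ s), ι w⟫) (φt t w) t) ∧
  (∀ᵐ t ∂(volume.restrict (Set.Ioo 0 T)), ∀ w : V,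
    -φt t w + ⟪σ t, grad w⟫ + ⟪dmul t (ι (φ t)), ι w⟫ = ⟪g t, ι w⟫) ∧
  (∀ᵐ t ∂(volume.restrict (Set.Ioo 0 T)), ∀ u : W,
    ⟪grad (φ t), u⟫ - ⟪cInv (σ t), u⟫ = ⟪G t, u⟫) ∧
  ContinuousOn (fun t => ι (φ t)) (Set.Icc 0 T) ∧ ι (φ T) = 0

namespace MeasureTheory

variable {α E : Type*} [MeasurableSpace α] {μ : Measure α}
  [NormedAddCommGroup E] [InnerProductSpace ℝ E]

theorem MemLp.inner_toLp_toLp {f g : α → E} (hf : MemLp f 2 μ) (hg : MemLp g 2 μ) :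
    ⟪hf.toLp f, hg.toLp g⟫ = ∫ a, ⟪f a, g a⟫ ∂μ := by
  rw [L2.inner_def]
  refine integral_congr_ae ?_
  filter_upwards [hf.coeFn_toLp, hg.coeFn_toLp] with a hfa hga
  rw [hfa, hga]

theorem L2.norm_sq_eq_integral (f : Lp E 2 μ) : ‖f‖ ^ 2 = ∫ a, ‖f a‖ ^ 2 ∂μ := by
  simp only [← real_inner_self_eq_norm_sq, L2.inner_def]

theorem MemLp.norm_toLp_sq {f : α → E} (hf : MemLp f 2 μ) :
    ‖hf.toLp f‖ ^ 2 = ∫ a, ‖f a‖ ^ 2 ∂μ := by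
  rw [L2.norm_sq_eq_integral]
  refine integral_congr_ae ?_
  filter_upwards [hf.coeFn_toLp] with a hfa
  rw [hfa]

end MeasureTheory

section BackwardProblem

abbrev BackwardData (T : ℝ) (H W : Type*) [NormedAddCommGroup H] [InnerProductSpace ℝ H]
    [NormedAddCommGroup W] [InnerProductSpace ℝ W] : Type _ :=
  WithLp 2 (Lp H 2 (volume.restrict (Set.Ioo 0 T)) × Lp W 2 (volume.restrict (Set.Ioo 0 T)))

abbrev BackwardObservation (T : ℝ) (H W : Type*) [NormedAddCommGroup H]
    [InnerProductSpace ℝ H] [NormedAddCommGroup W] [InnerProductSpace ℝ W] : Type _ :=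
  WithLp 2 (WithLp 2 (Lp H 2 (volume.restrict (Set.Ioo 0 T)) × H) ×
    Lp W 2 (volume.restrict (Set.Ioo 0 T)))

variable {V H W : Type*} [NormedAddCommGroup V] [InnerProductSpace ℝ V]
  [NormedAddCommGroup H] [InnerProductSpace ℝ H] [NormedAddCommGroup W] [InnerProductSpace ℝ W]
  {T : ℝ} {ι : V →L[ℝ] H} {grad : V →L[ℝ] W} {cInv : W →L[ℝ] W}
  {dmul : ℝ → H →L[ℝ] H} {g g' : ℝ → H} {G G' : ℝ → W} {φ φ' : ℝ → V}
  {φt φt' : ℝ → V →L[ℝ] ℝ} {σ σ' : ℝ → W} {C : ℝ} {f : ℝ → H} {F : ℝ → W}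

namespace IsBackwardWeakSolution

theorem add (h : IsBackwardWeakSolution T ι grad cInv dmul g G φ φt σ)
    (h' : IsBackwardWeakSolution T ι grad cInv dmul g' G' φ' φt' σ') :
    IsBackwardWeakSolution T ι grad cInv dmul (g + g') (G + G') (φ + φ') (φt + φt')
      (σ + σ') := by
  obtain ⟨hφ, hφt, hσ, hderiv, heq, hconst, hcont, hfinal⟩ := h
  obtain ⟨hφ', hφt', hσ', hderiv', heq', hconst', hcont', hfinal'⟩ := h'
  refine ⟨hφ.add hφ', MemLp.add (ε := V →L[ℝ] ℝ) hφt hφt', hσ.add hσ', fun w => ?_, ?_, ?_, ?_, ?_⟩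
  · filter_upwards [hderiv w, hderiv' w] with t ht ht'
    simp only [Pi.add_apply, add_apply, map_add, inner_add_left]
    exact ht.add ht'
  · filter_upwards [heq, heq'] with t ht ht' w
    simp only [Pi.add_apply, add_apply, map_add, inner_add_left]
    linarith [ht w, ht' w]
  · filter_upwards [hconst, hconst'] with t ht ht' u
    simp only [Pi.add_apply, map_add, inner_add_left]
    linarith [ht u, ht' u]
  · simp only [Pi.add_apply, map_add]
    exact hcont.add hcont'
  · simp [hfinal, hfinal']

theorem const_smul (r : ℝ) (h : IsBackwardWeakSolution T ι grad cInv dmul g G φ φt σ) :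
    IsBackwardWeakSolution T ι grad cInv dmul (r • g) (r • G) (r • φ) (r • φt) (r • σ) := by
  obtain ⟨hφ, hφt, hσ, hderiv, heq, hconst, hcont, hfinal⟩ := h
  refine ⟨hφ.const_smul r, hφt.const_smul r, hσ.const_smul r, fun w => ?_, ?_, ?_, ?_, ?_⟩
  · filter_upwards [hderiv w] with t ht
    simpa only [Pi.smul_apply, map_smul, real_inner_smul_left, smul_apply,
      smul_eq_mul] using ht.const_mul r
  · filter_upwards [heq] with t ht w
    simp only [Pi.smul_apply, smul_apply, map_smul, real_inner_smul_left,
      smul_eq_mul]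
    linear_combination r * ht w
  · filter_upwards [hconst] with t ht u
    simp only [Pi.smul_apply, map_smul, real_inner_smul_left]
    linear_combination r * ht u
  · simp only [Pi.smul_apply, map_smul]
    exact hcont.const_smul r
  · simp [hfinal]

noncomputable def observation
    (h : IsBackwardWeakSolution T ι grad cInv dmul g G φ φt σ) : BackwardObservation T H W :=
  WithLp.toLp 2 (WithLp.toLp 2 ((ι.comp_memLp' h.1).toLp (ι ∘ φ), ι (φ 0)), h.2.2.1.toLp σ)

theorem observation_add (h : IsBackwardWeakSolution T ι grad cInv dmul g G φ φt σ)
    (h' : IsBackwardWeakSolution T ι grad cInv dmul g' G' φ' φt' σ') :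
    (h.add h').observation = h.observation + h'.observation := by
  have hcomp : ι ∘ (φ + φ') = ι ∘ φ + ι ∘ φ' := by ext; simp
  simp only [observation, hcomp, ← WithLp.toLp_add, Prod.mk_add_mk, ← MemLp.toLp_add,
    Pi.add_apply, map_add]

theorem observation_const_smul (r : ℝ)
    (h : IsBackwardWeakSolution T ι grad cInv dmul g G φ φt σ) :
    (h.const_smul r).observation = r • h.observation := by
  have hcomp : ι ∘ (r • φ) = r • (ι ∘ φ) := by ext; simp
  simp only [observation, hcomp, ← WithLp.toLp_smul, Prod.smul_mk, ← MemLp.toLp_const_smul,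
    Pi.smul_apply, map_smul]

theorem norm_observation_sq (h : IsBackwardWeakSolution T ι grad cInv dmul g G φ φt σ) :
    ‖h.observation‖ ^ 2 = (∫ t in Set.Ioo 0 T, ‖ι (φ t)‖ ^ 2) + ‖ι (φ 0)‖ ^ 2 +
      ∫ t in Set.Ioo 0 T, ‖σ t‖ ^ 2 := by
  simp only [observation, WithLp.prod_norm_sq_eq_of_L2, WithLp.toLp_fst, WithLp.toLp_snd,
    MemLp.norm_toLp_sq, Function.comp_apply]

end IsBackwardWeakSolution

variable (T ι grad cInv dmul) in
def BackwardWeakSolvable : Prop :=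
  ∀ (g : ℝ → H) (G : ℝ → W),
    MemLp g 2 (volume.restrict (Set.Ioo 0 T)) → MemLp G 2 (volume.restrict (Set.Ioo 0 T)) →
    ∃ (φ : ℝ → V) (φt : ℝ → V →L[ℝ] ℝ) (σ : ℝ → W),
      IsBackwardWeakSolution T ι grad cInv dmul g G φ φt σ

variable (T ι grad cInv dmul) in
def BackwardEnergyEstimate (C : ℝ) : Prop :=
  ∀ (g : ℝ → H) (G : ℝ → W) (φ : ℝ → V) (φt : ℝ → V →L[ℝ] ℝ) (σ : ℝ → W),
    IsBackwardWeakSolution T ι grad cInv dmul g G φ φt σ →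
    (∫ t in Set.Ioo 0 T, ‖ι (φ t)‖ ^ 2) + ‖ι (φ 0)‖ ^ 2 + (∫ t in Set.Ioo 0 T, ‖σ t‖ ^ 2) ≤
      C * ((∫ t in Set.Ioo 0 T, ‖g t‖ ^ 2) + (∫ t in Set.Ioo 0 T, ‖G t‖ ^ 2))

namespace BackwardEnergyEstimate

theorem norm_observation_sq_le (hest : BackwardEnergyEstimate T ι grad cInv dmul C)
    (h : IsBackwardWeakSolution T ι grad cInv dmul g G φ φt σ) :
    ‖h.observation‖ ^ 2 ≤
      C * ((∫ t in Set.Ioo 0 T, ‖g t‖ ^ 2) + (∫ t in Set.Ioo 0 T, ‖G t‖ ^ 2)) :=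
  h.norm_observation_sq ▸ hest _ _ _ _ _ h

theorem observation_eq (hest : BackwardEnergyEstimate T ι grad cInv dmul C)
    (h : IsBackwardWeakSolution T ι grad cInv dmul g G φ φt σ)
    (h' : IsBackwardWeakSolution T ι grad cInv dmul g' G' φ' φt' σ')
    (hg : g =ᵐ[volume.restrict (Set.Ioo 0 T)] g') (hG : G =ᵐ[volume.restrict (Set.Ioo 0 T)] G') :
    h.observation = h'.observation := by
  have hg0 : ∫ t in Set.Ioo 0 T, ‖(g + (-1 : ℝ) • g') t‖ ^ 2 = 0 :=
    integral_eq_zero_of_ae (by filter_upwards [hg] with t ht; simp [ht])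
  have hG0 : ∫ t in Set.Ioo 0 T, ‖(G + (-1 : ℝ) • G') t‖ ^ 2 = 0 :=
    integral_eq_zero_of_ae (by filter_upwards [hG] with t ht; simp [ht])
  have hnorm : ‖h.observation - h'.observation‖ ^ 2 ≤ 0 := by
    have := hest.norm_observation_sq_le (h.add (h'.const_smul (-1)))
    rwa [h.observation_add (h'.const_smul (-1)), h'.observation_const_smul, hg0, hG0,
      add_zero, mul_zero, neg_one_smul, ← sub_eq_add_neg] at this
  rw [← sub_eq_zero, ← norm_eq_zero]
  exact pow_eq_zero_iff two_ne_zero |>.mp (le_antisymm hnorm (sq_nonneg _))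

end BackwardEnergyEstimate

noncomputable def backwardObservationMap (hback : BackwardWeakSolvable T ι grad cInv dmul)
    (z : BackwardData T H W) : BackwardObservation T H W :=
  (hback _ _ (Lp.memLp z.fst) (Lp.memLp z.snd)).choose_spec.choose_spec.choose_spec.observation

theorem backwardObservationMap_eq (hback : BackwardWeakSolvable T ι grad cInv dmul)
    (hest : BackwardEnergyEstimate T ι grad cInv dmul C) {z : BackwardData T H W}
    (h : IsBackwardWeakSolution T ι grad cInv dmul g G φ φt σ)
    (hg : g =ᵐ[volume.restrict (Set.Ioo 0 T)] z.fst)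
    (hG : G =ᵐ[volume.restrict (Set.Ioo 0 T)] z.snd) :
    backwardObservationMap hback z = h.observation :=
  hest.observation_eq _ h hg.symm hG.symm

theorem backwardObservationMap_add (hback : BackwardWeakSolvable T ι grad cInv dmul)
    (hest : BackwardEnergyEstimate T ι grad cInv dmul C) (z z' : BackwardData T H W) :
    backwardObservationMap hback (z + z') =
      backwardObservationMap hback z + backwardObservationMap hback z' := by
  obtain ⟨φ, φt, σ, h⟩ := hback _ _ (Lp.memLp z.fst) (Lp.memLp z.snd)
  obtain ⟨φ', φt', σ', h'⟩ := hback _ _ (Lp.memLp z'.fst) (Lp.memLp z'.snd)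
  rw [backwardObservationMap_eq hback hest h .rfl .rfl,
    backwardObservationMap_eq hback hest h' .rfl .rfl, ← h.observation_add h',
    backwardObservationMap_eq hback hest (h.add h') (Lp.coeFn_add _ _).symm
      (Lp.coeFn_add _ _).symm]

theorem backwardObservationMap_smul (hback : BackwardWeakSolvable T ι grad cInv dmul)
    (hest : BackwardEnergyEstimate T ι grad cInv dmul C) (r : ℝ) (z : BackwardData T H W) :
    backwardObservationMap hback (r • z) = r • backwardObservationMap hback z := by
  obtain ⟨φ, φt, σ, h⟩ := hback _ _ (Lp.memLp z.fst) (Lp.memLp z.snd)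
  rw [backwardObservationMap_eq hback hest h .rfl .rfl, ← h.observation_const_smul r,
    backwardObservationMap_eq hback hest (h.const_smul r) (Lp.coeFn_smul _ _).symm
      (Lp.coeFn_smul _ _).symm]

theorem norm_backwardObservationMap_le (hback : BackwardWeakSolvable T ι grad cInv dmul)
    (hest : BackwardEnergyEstimate T ι grad cInv dmul C) (z : BackwardData T H W) :
    ‖backwardObservationMap hback z‖ ≤ √C * ‖z‖ := by
  obtain ⟨φ, φt, σ, h⟩ := hback _ _ (Lp.memLp z.fst) (Lp.memLp z.snd)
  have hsq : ‖h.observation‖ ^ 2 ≤ C * ‖z‖ ^ 2 := by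
    rw [WithLp.prod_norm_sq_eq_of_L2 z, L2.norm_sq_eq_integral z.fst,
      L2.norm_sq_eq_integral z.snd]
    exact hest.norm_observation_sq_le h
  rw [backwardObservationMap_eq hback hest h .rfl .rfl, ← Real.sqrt_sq (norm_nonneg _),
    ← Real.sqrt_sq (norm_nonneg z), ← Real.sqrt_mul' C (sq_nonneg _)]
  exact Real.sqrt_le_sqrt hsq

noncomputable def backwardObservationCLM (hback : BackwardWeakSolvable T ι grad cInv dmul)
    (hest : BackwardEnergyEstimate T ι grad cInv dmul C) :
    BackwardData T H W →L[ℝ] BackwardObservation T H W :=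
  LinearMap.mkContinuous
    { toFun := backwardObservationMap hback
      map_add' := backwardObservationMap_add hback hest
      map_smul' := backwardObservationMap_smul hback hest }
    √C (norm_backwardObservationMap_le hback hest)

noncomputable def transpositionSource (cInv : W →L[ℝ] W)
    (hf : MemLp f 2 (volume.restrict (Set.Ioo 0 T))) (y0 : H)
    (hF : MemLp F 2 (volume.restrict (Set.Ioo 0 T))) : BackwardObservation T H W :=
  WithLp.toLp 2 (WithLp.toLp 2 (hf.toLp f, y0), (cInv.comp_memLp' hF).toLp (cInv ∘ F))

theorem inner_transpositionSource_observation
    (hf : MemLp f 2 (volume.restrict (Set.Ioo 0 T))) (y0 : H)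
    (hF : MemLp F 2 (volume.restrict (Set.Ioo 0 T)))
    (h : IsBackwardWeakSolution T ι grad cInv dmul g G φ φt σ) :
    ⟪transpositionSource cInv hf y0 hF, h.observation⟫ =
      (∫ t in Set.Ioo 0 T, ⟪f t, ι (φ t)⟫) + ⟪y0, ι (φ 0)⟫ +
        ∫ t in Set.Ioo 0 T, ⟪cInv (F t), σ t⟫ := by
  simp only [transpositionSource, IsBackwardWeakSolution.observation, WithLp.prod_inner_apply,
    MemLp.inner_toLp_toLp, Function.comp_apply]

theorem inner_adjoint_transpositionSource [CompleteSpace H] [CompleteSpace W]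
    (hback : BackwardWeakSolvable T ι grad cInv dmul)
    (hest : BackwardEnergyEstimate T ι grad cInv dmul C)
    (hf : MemLp f 2 (volume.restrict (Set.Ioo 0 T))) (y0 : H)
    (hF : MemLp F 2 (volume.restrict (Set.Ioo 0 T)))
    (h : IsBackwardWeakSolution T ι grad cInv dmul g G φ φt σ)
    (hg : MemLp g 2 (volume.restrict (Set.Ioo 0 T)))
    (hG : MemLp G 2 (volume.restrict (Set.Ioo 0 T))) :
    ⟪(backwardObservationCLM hback hest).adjoint (transpositionSource cInv hf y0 hF),
        WithLp.toLp 2 (hg.toLp g, hG.toLp G)⟫ =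
      (∫ t in Set.Ioo 0 T, ⟪f t, ι (φ t)⟫) + ⟪y0, ι (φ 0)⟫ +
        ∫ t in Set.Ioo 0 T, ⟪cInv (F t), σ t⟫ := by
  rw [ContinuousLinearMap.adjoint_inner_left, ← inner_transpositionSource_observation hf y0 hF h]
  congr 1
  exact backwardObservationMap_eq hback hest h hg.coeFn_toLp.symm hG.coeFn_toLp.symm

end BackwardProblem

theorem firstOrder_system_transposition_wellPosed_general
    (T : ℝ)
    (ι : V →L[ℝ] H) (grad : V →L[ℝ] W) (cInv : W →L[ℝ] W)
    (dmul : ℝ → H →L[ℝ] H)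
    -- data
    (f : ℝ → H) (F : ℝ → W) (y0 : H)
    (hf : MemLp f 2 (volume.restrict (Set.Ioo 0 T)))
    (hF : MemLp F 2 (volume.restrict (Set.Ioo 0 T)))
    -- existence of backward weak solutions (Proposition A.1, reversed time)
    (hback : ∀ (g : ℝ → H) (G : ℝ → W),
      MemLp g 2 (volume.restrict (Set.Ioo 0 T)) →
      MemLp G 2 (volume.restrict (Set.Ioo 0 T)) →
      ∃ (φ : ℝ → V) (φt : ℝ → V →L[ℝ] ℝ) (σ : ℝ → W),
        IsBackwardWeakSolution T ι grad cInv dmul g G φ φt σ)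
    -- energy estimate for the backward weak solutions
    (hbackest : ∃ C > 0, ∀ (g : ℝ → H) (G : ℝ → W)
      (φ : ℝ → V) (φt : ℝ → V →L[ℝ] ℝ) (σ : ℝ → W),
      IsBackwardWeakSolution T ι grad cInv dmul g G φ φt σ →
      (∫ t in Set.Ioo 0 T, ‖ι (φ t)‖ ^ 2) + ‖ι (φ 0)‖ ^ 2 +
          (∫ t in Set.Ioo 0 T, ‖σ t‖ ^ 2) ≤
        C * ((∫ t in Set.Ioo 0 T, ‖g t‖ ^ 2) +
          (∫ t in Set.Ioo 0 T, ‖G t‖ ^ 2))) :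
    ∃! yp : Lp H 2 (volume.restrict (Set.Ioo 0 T)) ×
        Lp W 2 (volume.restrict (Set.Ioo 0 T)),
      ∀ (g : ℝ → H) (G : ℝ → W)
        (hg : MemLp g 2 (volume.restrict (Set.Ioo 0 T)))
        (hG : MemLp G 2 (volume.restrict (Set.Ioo 0 T)))
        (φ : ℝ → V) (φt : ℝ → V →L[ℝ] ℝ) (σ : ℝ → W),
        IsBackwardWeakSolution T ι grad cInv dmul g G φ φt σ →
        ⟪yp.1, hg.toLp g⟫ + ⟪yp.2, hG.toLp G⟫ =
          (∫ t in Set.Ioo 0 T, ⟪f t, ι (φ t)⟫) + ⟪y0, ι (φ 0)⟫ +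
            ∫ t in Set.Ioo 0 T, ⟪cInv (F t), σ t⟫ := by
  obtain ⟨C, -, hest⟩ := hbackest
  set yp := (backwardObservationCLM hback hest).adjoint (transpositionSource cInv hf y0 hF)
  refine ⟨(yp.fst, yp.snd), fun g G hg hG φ φt σ h =>
    inner_adjoint_transpositionSource hback hest hf y0 hF h hg hG, fun yp' hyp' => ?_⟩
  suffices WithLp.toLp 2 yp' = yp from congrArg WithLp.ofLp this
  refine ext_inner_right ℝ fun z => ?_
  obtain ⟨φ, φt, σ, h⟩ := hback _ _ (Lp.memLp z.fst) (Lp.memLp z.snd)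
  have hz := hyp' _ _ (Lp.memLp z.fst) (Lp.memLp z.snd) φ φt σ h
  rw [← inner_adjoint_transpositionSource hback hest hf y0 hF h (Lp.memLp _) (Lp.memLp _)] at hz
  simp only [Lp.toLp_coeFn] at hz
  exact hz

/-- Proposition A.2: there exists a unique solution by transposition of the
first-order parabolic system. -/
theorem firstOrder_system_transposition_wellPosed
    (T : ℝ) (hT : 0 < T)
    (ι : V →L[ℝ] H) (grad : V →L[ℝ] W) (cInv : W →L[ℝ] W)
    (dmul : ℝ → H →L[ℝ] H)
    (hι : Function.Injective ι) (hdense : DenseRange ι)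
    (c₀ : ℝ) (hc₀ : 0 < c₀)
    (hell : ∀ u : W, c₀ * ‖u‖ ^ 2 ≤ ⟪cInv u, u⟫)
    (hcsym : ∀ u v : W, ⟪cInv u, v⟫ = ⟪u, cInv v⟫)
    (Md : ℝ) (hMd : 0 ≤ Md) (hd : ∀ t : ℝ, ‖dmul t‖ ≤ Md)
    -- data
    (f : ℝ → H) (F : ℝ → W) (y0 : H)
    (hf : MemLp f 2 (volume.restrict (Set.Ioo 0 T)))
    (hF : MemLp F 2 (volume.restrict (Set.Ioo 0 T)))
    -- existence of backward weak solutions (Proposition A.1, reversed time)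
    (hback : ∀ (g : ℝ → H) (G : ℝ → W),
      MemLp g 2 (volume.restrict (Set.Ioo 0 T)) →
      MemLp G 2 (volume.restrict (Set.Ioo 0 T)) →
      ∃ (φ : ℝ → V) (φt : ℝ → V →L[ℝ] ℝ) (σ : ℝ → W),
        IsBackwardWeakSolution T ι grad cInv dmul g G φ φt σ)
    -- energy estimate for the backward weak solutions
    (hbackest : ∃ C > 0, ∀ (g : ℝ → H) (G : ℝ → W)
      (φ : ℝ → V) (φt : ℝ → V →L[ℝ] ℝ) (σ : ℝ → W),
      IsBackwardWeakSolution T ι grad cInv dmul g G φ φt σ →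
      (∫ t in Set.Ioo 0 T, ‖ι (φ t)‖ ^ 2) + ‖ι (φ 0)‖ ^ 2 +
          (∫ t in Set.Ioo 0 T, ‖σ t‖ ^ 2) ≤
        C * ((∫ t in Set.Ioo 0 T, ‖g t‖ ^ 2) +
          (∫ t in Set.Ioo 0 T, ‖G t‖ ^ 2))) :
    ∃! yp : Lp H 2 (volume.restrict (Set.Ioo 0 T)) ×
        Lp W 2 (volume.restrict (Set.Ioo 0 T)),
      ∀ (g : ℝ → H) (G : ℝ → W)
        (hg : MemLp g 2 (volume.restrict (Set.Ioo 0 T)))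
        (hG : MemLp G 2 (volume.restrict (Set.Ioo 0 T)))
        (φ : ℝ → V) (φt : ℝ → V →L[ℝ] ℝ) (σ : ℝ → W),
        IsBackwardWeakSolution T ι grad cInv dmul g G φ φt σ →
        ⟪yp.1, hg.toLp g⟫ + ⟪yp.2, hG.toLp G⟫ =
          (∫ t in Set.Ioo 0 T, ⟪f t, ι (φ t)⟫) + ⟪y0, ι (φ 0)⟫ +
            ∫ t in Set.Ioo 0 T, ⟪cInv (F t), σ t⟫ :=
  firstOrder_system_transposition_wellPosed_general T ι grad cInv dmul f F y0 hf hF hback hbackest
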